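/- For the disjunctive program P = { a ∨ b ∨ c ← ; p ← ¬a, ¬p ; q ← ¬b, ¬q }, the interpretation {a, b, c} is a founded model of P (i.e., a model M of P with M ⊆ S_{P/M}^ω(∅)) but is not a minimal founded model of P, since {a, b} is a proper sub-model. -/
import Mathlib


/-- A ground disjunctive rule: head atoms, positive body atoms, negative body atoms. -/
structure Rule (α : Type*) where
  head : Set α
  posBody : Set α
  negBody : Set α

variable {α : Type*}

/-- `M` satisfies rule `r`: if the body is true in `M`, some head atom is in `M`. -/
def satisfies (M : Set α) (r : Rule α) : Prop :=
  r.posBody ⊆ M → r.negBody ∩ M = ∅ → (r.head ∩ M).Nonempty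

/-- `M` is a model of program `P`. -/
def isModel (P : Set (Rule α)) (M : Set α) : Prop := ∀ r ∈ P, satisfies M r

/-- `M` is a minimal model of `P`. -/
def isMinimalModel (P : Set (Rule α)) (M : Set α) : Prop :=
  isModel P M ∧ ∀ N : Set α, N ⊆ M → isModel P N → N = M

/-- Gelfond–Lifschitz reduct `P/M`. -/
def reduct (P : Set (Rule α)) (M : Set α) : Set (Rule α) :=
  {r' | ∃ r ∈ P, r.negBody ∩ M = ∅ ∧ r' = ⟨r.head, r.posBody, ∅⟩}

/-- Extended immediate consequence operator for (positive) programs. -/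
def S (Q : Set (Rule α)) (I : Set α) : Set α :=
  {a | ∃ r ∈ Q, a ∈ r.head ∧ r.posBody ⊆ I}

/-- Least fixpoint of `S Q` as the union of its iterates from `∅`. -/
def lfpS (Q : Set (Rule α)) : Set α := ⋃ n : ℕ, (S Q)^[n] ∅

/-- `M` is founded for `P`: every atom of `M` is derivable from the reduct. -/
def founded (P : Set (Rule α)) (M : Set α) : Prop := M ⊆ lfpS (reduct P M)

/-- `M` is a (disjunctive) stable model of `P`. -/
def stable (P : Set (Rule α)) (M : Set α) : Prop := isMinimalModel (reduct P M) M

/-- `M` is a minimal founded model of `P`. -/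
def minimalFounded (P : Set (Rule α)) (M : Set α) : Prop :=
  isMinimalModel P M ∧ founded P M

inductive Atom | a | b | c | p | q
  deriving DecidableEq

open Atom

/-- `P = { a ∨ b ∨ c ← ; p ← ¬a, ¬p ; q ← ¬b, ¬q }`. -/
def P : Set (Rule Atom) :=
  {⟨{a, b, c}, ∅, ∅⟩, ⟨{p}, ∅, {a, p}⟩, ⟨{q}, ∅, {b, q}⟩}

/-- `{a, b, c}` is a founded model of `P`, but `{a, b}` is a
(proper sub-)model, hence `{a, b, c}` is not a minimal founded model. -/
theorem abc_founded_not_minimalFounded :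
    isModel P {a, b, c} ∧ founded P {a, b, c} ∧
      isModel P {a, b} ∧ ¬ minimalFounded P {a, b, c} := by
  have hab : isModel P {a, b} := by
    intro r hr
    rcases hr with h | h | h <;> subst h <;> intro hpos hneg
    · exact ⟨a, by simp, by simp⟩
    · exfalso
      have : Atom.a ∈ ({a, p} : Set Atom) ∩ {a, b} := by simp
      simp [hneg] at this
    · exfalso
      have : Atom.b ∈ ({b, q} : Set Atom) ∩ {a, b} := by simp
      simp [hneg] at this
  have habc : isModel P {a, b, c} := by
    intro r hr
    rcases hr with h | h | h <;> subst h <;> intro hpos hneg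
    · exact ⟨a, by simp, by simp⟩
    · exfalso
      have : Atom.a ∈ ({a, p} : Set Atom) ∩ {a, b, c} := by simp
      simp [hneg] at this
    · exfalso
      have : Atom.b ∈ ({b, q} : Set Atom) ∩ {a, b, c} := by simp
      simp [hneg] at this
  refine ⟨habc, ?_, hab, ?_⟩
  · intro x hx
    have hr1 : (⟨{a, b, c}, ∅, ∅⟩ : Rule Atom) ∈ reduct P {a, b, c} := by
      refine ⟨⟨{a, b, c}, ∅, ∅⟩, by simp [P], by simp, rfl⟩
    refine Set.mem_iUnion.2 ⟨1, ?_⟩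
    exact ⟨_, hr1, hx, by simp⟩
  · rintro ⟨⟨_, hmin⟩, _⟩
    have := hmin {a, b} (by intro x hx; simp at hx ⊢; tauto) hab
    have hc : Atom.c ∈ ({a, b} : Set Atom) := this ▸ (by simp)
    simp at hc
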